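/- (Theorem 2, Threshold Expansion approximation guarantee, stated for any execution trace satisfying the greedy invariant.) Let P be a finite nonempty set of paths, x an impact vector, ε ∈ (0,1), ϵ ∈ [0,1), and let s* be an impact vector with d_{x+s*}(p) ≥ T for all p ∈ P and ‖s*‖ > 0. Let s_0 = 0 and, for t = 1,…,L, let s_t = s_{t−1} + ⟨v_t, x̂_t⟩ with x̂_t > 0, where, writing P_{t−1} = {p ∈ P : d_{x+s_{t−1}}(p) < T(1−ε)}, the following holds for every t: for every vertex u with (s* \ s_{t−1})_u > 0, r_{P_{t−1},x+s_{t−1},v_t}(x̂_t)/x̂_t ≥ (1−ϵ) · r_{P_{t−1},x+s_{t−1},u}((s*\s_{t−1})_u)/(s*\s_{t−1})_u. If P_{L−1} ≠ ∅, then ‖s_L‖ = ∑_{t=1}^{L} x̂_t ≤ ‖s*‖ · (ln(|P|·ε^{−1}) + 1)/(1−ϵ). -/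

import Mathlib

/-!
Let `D_t = ∑_{p ∈ P_t} (T - d_{x+s_t}(p))` be the total deficit of the paths still short after
step `t`. Since `y ↦ min y T` has decreasing increments and `x + s_t + (s* \ s_t)` fills every
path, `D_t ≤ ∑_u r_{P_t,x+s_t,u}((s* \ s_t)_u)`. By averaging, some `u` has gain rate at least
`D_t / ‖s* \ s_t‖ ≥ D_t / ‖s*‖`, and the greedy invariant turns this into
`(1-ϵ) D_t x̂_{t+1} ≤ ‖s*‖ (D_t - D_{t+1})`, hence `D_t ≤ D_0 exp(-(1-ϵ)‖s_t‖/‖s*‖)`.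
As `D_0 ≤ |P| T` and `D_{L-1} ≥ ε T`, the first `L-1` steps cost at most
`‖s*‖ ln(|P|/ε)/(1-ϵ)`, and the last one at most `‖s*‖/(1-ϵ)`.
-/

/-- The capped length of a path `p` under impact vector `x`:
`d_x(p) = min(∑_{v ∈ p} f_v(x_v), T)`. -/
noncomputable def dLen {V : Type*} (f : V → ℝ → ℝ) (T : ℝ) (x : V → ℝ) (p : List V) : ℝ :=
  min ((p.map (fun v => f v (x v))).sum) T

/-- `r_{P,w,v}(a) = ∑_{p∈P} (d_{w+⟨v,a⟩}(p) − d_w(p))`. -/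
noncomputable def rGain {V : Type*} [DecidableEq V] (f : V → ℝ → ℝ) (T : ℝ)
    (P : Finset (List V)) (w : V → ℝ) (v : V) (a : ℝ) : ℝ :=
  ∑ p ∈ P, (dLen f T (w + Pi.single v a) p - dLen f T w p)

open Finset

lemma min_add_sub_min_le_of_le {a b δ T : ℝ} (hab : a ≤ b) (hδ : 0 ≤ δ) :
    min (b + δ) T - min b T ≤ min (a + δ) T - min a T := by
  simp only [min_def]
  split_ifs <;> linarith

lemma min_add_sum_sub_min_le {ι : Type*} (s : Finset ι) (a T : ℝ) (δ : ι → ℝ)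
    (hδ : ∀ i ∈ s, 0 ≤ δ i) :
    min (a + ∑ i ∈ s, δ i) T - min a T ≤ ∑ i ∈ s, (min (a + δ i) T - min a T) := by
  induction s using Finset.cons_induction with
  | empty => simp
  | cons j s hj ih =>
    rw [sum_cons, sum_cons, show a + (δ j + ∑ i ∈ s, δ i) = a + ∑ i ∈ s, δ i + δ j by ring]
    have hs : 0 ≤ ∑ i ∈ s, δ i := sum_nonneg fun i hi => hδ i (mem_cons_of_mem hi)
    have := min_add_sub_min_le_of_le (b := a + ∑ i ∈ s, δ i) (T := T)
      (le_add_of_nonneg_right hs) (hδ j (mem_cons_self j s))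
    linarith [ih fun i hi => hδ i (mem_cons_of_mem hi)]

lemma monotoneOn_nat_Iic_of_le_succ {β : Type*} [Preorder β] {g : ℕ → β} {n : ℕ}
    (h : ∀ t < n, g t ≤ g (t + 1)) : MonotoneOn g (Set.Iic n) := by
  intro a _ b hb hab
  induction b, hab using Nat.le_induction with
  | base => exact le_rfl
  | succ b _ ih =>
    have hb' : b + 1 ≤ n := hb
    exact (ih (show b ≤ n by omega)).trans (h b (by omega))

lemma monotoneOn_Iic_of_eq_add_single {ι : Type*} [DecidableEq ι] {s : ℕ → ι → ℝ} {v : ℕ → ι}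
    {a : ℕ → ℝ} {L : ℕ} (ha : ∀ t, 1 ≤ t → t ≤ L → 0 ≤ a t)
    (hstep : ∀ t, 1 ≤ t → t ≤ L → s t = s (t - 1) + Pi.single (v t) (a t)) :
    MonotoneOn s (Set.Iic L) :=
  monotoneOn_nat_Iic_of_le_succ fun t ht => by
    rw [hstep (t + 1) (by omega) ht, Nat.add_sub_cancel]
    exact le_add_of_nonneg_right (Pi.single_nonneg.2 (ha (t + 1) (by omega) ht))

lemma exists_pos_mul_le_mul_sum_of_le_sum {ι : Type*} [Fintype ι] {D : ℝ} {r g : ι → ℝ}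
    (hg : ∀ i, 0 ≤ g i) (hpos : 0 < ∑ i, g i) (hr : ∀ i, g i = 0 → r i = 0)
    (hD : D ≤ ∑ i, r i) : ∃ i, 0 < g i ∧ D * g i ≤ r i * ∑ j, g j := by
  by_contra! hlt
  have hle : ∀ i ∈ univ, r i * ∑ j, g j ≤ D * g i := fun i _ => by
    rcases (hg i).eq_or_lt with h | h
    · simp [← h, hr i h.symm]
    · exact (hlt i h).le
  obtain ⟨i, -, hi⟩ :=
    exists_lt_of_sum_lt (s := univ) (f := fun _ => (0 : ℝ)) (by simpa using hpos)
  have := sum_lt_sum hle ⟨i, mem_univ i, hlt i hi⟩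
  rw [← sum_mul, ← mul_sum] at this
  nlinarith

section Deficit

variable {V : Type*} (f : V → ℝ → ℝ) (T : ℝ)

noncomputable def deficit (Q : Finset (List V)) (w : V → ℝ) : ℝ :=
  ∑ p ∈ Q, (T - dLen f T w p)

variable {f T}

lemma dLen_le (x : V → ℝ) (p : List V) : dLen f T x p ≤ T := min_le_right _ _

lemma sum_map_le_sum_map (hf : ∀ v, MonotoneOn (f v) (Set.Ici 0)) {x y : V → ℝ}
    (hx : ∀ u, 0 ≤ x u) (hxy : x ≤ y) (p : List V) :
    (p.map fun v => f v (x v)).sum ≤ (p.map fun v => f v (y v)).sum :=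
  List.sum_le_sum fun v _ => hf v (hx v) ((hx v).trans (hxy v)) (hxy v)

lemma dLen_mono (hf : ∀ v, MonotoneOn (f v) (Set.Ici 0)) {x y : V → ℝ}
    (hx : ∀ u, 0 ≤ x u) (hxy : x ≤ y) (p : List V) : dLen f T x p ≤ dLen f T y p :=
  min_le_min_right T (sum_map_le_sum_map hf hx hxy p)

lemma sum_map_add_eq_add_sum_single [Fintype V] [DecidableEq V] (w Δ : V → ℝ) (p : List V) :
    (p.map fun v => f v ((w + Δ) v)).sum = (p.map fun v => f v (w v)).sum +
      ∑ u, ((p.map fun v => f v ((w + Pi.single u (Δ u) : V → ℝ) v)).sum -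
        (p.map fun v => f v (w v)).sum) := by
  induction p with
  | nil => simp
  | cons v p ih =>
    have hv : ∑ u, (f v ((w + Pi.single u (Δ u) : V → ℝ) v) - f v (w v)) =
        f v ((w + Δ) v) - f v (w v) := by
      rw [sum_eq_single v (fun u _ hu => by simp [Ne.symm hu]) (by simp)]
      simp
    simp only [List.map_cons, List.sum_cons]
    rw [ih]
    simp only [add_sub_add_comm, sum_add_distrib, hv]
    ring

lemma dLen_add_sub_le_sum_single [Fintype V] [DecidableEq V]
    (hf : ∀ v, MonotoneOn (f v) (Set.Ici 0)) {w Δ : V → ℝ} (hw : ∀ u, 0 ≤ w u)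
    (hΔ : ∀ u, 0 ≤ Δ u) (p : List V) :
    dLen f T (w + Δ) p - dLen f T w p ≤
      ∑ u, (dLen f T (w + Pi.single u (Δ u)) p - dLen f T w p) := by
  set a := (p.map fun v => f v (w v)).sum
  set c : V → ℝ := fun u => (p.map fun v => f v ((w + Pi.single u (Δ u) : V → ℝ) v)).sum - a
  have hc : ∀ u, 0 ≤ c u := fun u => sub_nonneg.2 <| sum_map_le_sum_map hf hw
    (le_add_of_nonneg_right fun v => by by_cases h : v = u <;> simp [h, hΔ]) p
  have hsingle : ∀ u, dLen f T (w + Pi.single u (Δ u)) p = min (a + c u) T := fun u => by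
    simp [dLen, c]
  have hfull : dLen f T (w + Δ) p = min (a + ∑ u, c u) T := by
    rw [dLen, sum_map_add_eq_add_sum_single]
  have hbase : dLen f T w p = min a T := rfl
  simpa only [hsingle, hfull, hbase] using min_add_sum_sub_min_le univ a T c fun u _ => hc u

lemma filter_dLen_lt_subset (hf : ∀ v, MonotoneOn (f v) (Set.Ici 0)) {x y : V → ℝ}
    (hx : ∀ u, 0 ≤ x u) (hxy : x ≤ y) (P : Finset (List V)) (θ : ℝ) :
    P.filter (fun p => dLen f T y p < θ) ⊆ P.filter (fun p => dLen f T x p < θ) :=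
  fun p hp => by
    rw [mem_filter] at hp ⊢
    exact ⟨hp.1, (dLen_mono hf hx hxy p).trans_lt hp.2⟩

lemma deficit_nonneg (Q : Finset (List V)) (w : V → ℝ) : 0 ≤ deficit f T Q w :=
  sum_nonneg fun p _ => sub_nonneg.2 (dLen_le w p)

lemma deficit_mono {Q Q' : Finset (List V)} (h : Q' ⊆ Q) (w : V → ℝ) :
    deficit f T Q' w ≤ deficit f T Q w :=
  sum_le_sum_of_subset_of_nonneg h fun p _ _ => sub_nonneg.2 (dLen_le w p)

lemma deficit_le_card_mul (hT : 0 ≤ T) (hf0 : ∀ v y, 0 ≤ y → 0 ≤ f v y)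
    (Q : Finset (List V)) {w : V → ℝ} (hw : ∀ u, 0 ≤ w u) : deficit f T Q w ≤ Q.card * T := by
  have hlen : ∀ p, 0 ≤ dLen f T w p := fun p =>
    le_min (List.sum_nonneg fun _ h => by
      obtain ⟨v, _, rfl⟩ := List.mem_map.1 h; exact hf0 v _ (hw v)) hT
  calc deficit f T Q w ≤ ∑ _p ∈ Q, T := sum_le_sum fun p _ => by linarith [hlen p]
    _ = Q.card * T := by rw [sum_const, nsmul_eq_mul]

lemma le_deficit_of_mem {Q : Finset (List V)} {w : V → ℝ} {p : List V} (hp : p ∈ Q) {m : ℝ}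
    (hlt : dLen f T w p ≤ T - m) : m ≤ deficit f T Q w :=
  (le_sub_comm.1 hlt).trans <|
    single_le_sum (f := fun q => T - dLen f T w q) (fun q _ => sub_nonneg.2 (dLen_le w q)) hp

lemma sum_pos_of_cover [Fintype V] {Q : Finset (List V)} {w Δ : V → ℝ}
    (hΔ : ∀ u, 0 ≤ Δ u) (hcover : ∀ p ∈ Q, T ≤ dLen f T (w + Δ) p) {p : List V} (hp : p ∈ Q)
    (hlt : dLen f T w p < T) : 0 < ∑ u, Δ u := by
  refine (sum_nonneg fun u _ => hΔ u).lt_of_ne fun h => ?_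
  have hΔ0 : Δ = 0 :=
    funext fun u => (sum_eq_zero_iff_of_nonneg fun u _ => hΔ u).1 h.symm u (mem_univ u)
  rw [hΔ0, add_zero] at hcover
  exact (hcover p hp).not_gt hlt

variable [DecidableEq V]

lemma rGain_zero (Q : Finset (List V)) (w : V → ℝ) (u : V) : rGain f T Q w u 0 = 0 := by
  simp [rGain]

lemma deficit_add_single (Q : Finset (List V)) (w : V → ℝ) (v : V) (a : ℝ) :
    deficit f T Q (w + Pi.single v a) = deficit f T Q w - rGain f T Q w v a := by
  simp only [deficit, rGain, ← sum_sub_distrib]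
  exact sum_congr rfl fun p _ => by ring

lemma deficit_le_sum_rGain [Fintype V] (hf : ∀ v, MonotoneOn (f v) (Set.Ici 0))
    {Q : Finset (List V)} {w Δ : V → ℝ} (hw : ∀ u, 0 ≤ w u) (hΔ : ∀ u, 0 ≤ Δ u)
    (hcover : ∀ p ∈ Q, T ≤ dLen f T (w + Δ) p) :
    deficit f T Q w ≤ ∑ u, rGain f T Q w u (Δ u) := by
  simp only [rGain]
  rw [sum_comm]
  refine sum_le_sum fun p hp => ?_
  have := dLen_add_sub_le_sum_single (T := T) hf hw hΔ p
  linarith [hcover p hp]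

lemma deficit_mul_le_rGain_mul [Fintype V] (hf : ∀ v, MonotoneOn (f v) (Set.Ici 0))
    {Q : Finset (List V)} {w Δ : V → ℝ} (hw : ∀ u, 0 ≤ w u) (hΔ : ∀ u, 0 ≤ Δ u)
    (hcover : ∀ p ∈ Q, T ≤ dLen f T (w + Δ) p) (hΔpos : 0 < ∑ u, Δ u) {S c : ℝ}
    (hΔS : ∑ u, Δ u ≤ S) (hc : 0 ≤ c) {v : V} {a : ℝ} (ha : 0 < a)
    (hgreedy : ∀ u, 0 < Δ u → c * (rGain f T Q w u (Δ u) / Δ u) ≤ rGain f T Q w v a / a) :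
    c * deficit f T Q w * a ≤ rGain f T Q w v a * S := by
  obtain ⟨u, hu, hDu⟩ :=
    exists_pos_mul_le_mul_sum_of_le_sum (r := fun u => rGain f T Q w u (Δ u)) hΔ hΔpos (fun u h => by simp only [h, rGain_zero]) (deficit_le_sum_rGain hf hw hΔ hcover)
  have hratio : deficit f T Q w / S ≤ rGain f T Q w u (Δ u) / Δ u :=
    calc deficit f T Q w / S ≤ deficit f T Q w / ∑ u, Δ u :=
          div_le_div_of_nonneg_left (deficit_nonneg Q w) hΔpos hΔS
      _ ≤ _ := (div_le_div_iff₀ hΔpos hu).2 hDu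
  rw [← div_le_div_iff₀ (hΔpos.trans_le hΔS) ha, mul_div_assoc]
  exact (mul_le_mul_of_nonneg_left hratio hc).trans (hgreedy u hu)

lemma deficit_decrease_of_greedy [Fintype V] (hf : ∀ v, MonotoneOn (f v) (Set.Ici 0))
    {P Q Q' : Finset (List V)} (hQ : Q ⊆ P) (hQ' : Q' ⊆ Q) {x s sStar : V → ℝ}
    (hx : ∀ u, 0 ≤ x u) (hs : ∀ u, 0 ≤ s u) (hsStar : ∀ u, 0 ≤ sStar u)
    (hopt : ∀ p ∈ P, T ≤ dLen f T (x + sStar) p) {p : List V} (hp : p ∈ Q)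
    (hlt : dLen f T (x + s) p < T) {c : ℝ} (hc : 0 ≤ c) {v : V} {a : ℝ} (ha : 0 < a)
    (hgreedy : ∀ u, 0 < max (sStar u - s u) 0 →
      c * (rGain f T Q (x + s) u (max (sStar u - s u) 0) / max (sStar u - s u) 0)
        ≤ rGain f T Q (x + s) v a / a) :
    c * deficit f T Q (x + s) * a ≤
      (deficit f T Q (x + s) - deficit f T Q' (x + s + Pi.single v a)) * ∑ u, sStar u := by
  set Δ : V → ℝ := fun u => max (sStar u - s u) 0
  have hΔ : ∀ u, 0 ≤ Δ u := fun u => le_max_right _ _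
  have hcover : ∀ q ∈ Q, T ≤ dLen f T (x + s + Δ) q := fun q hq =>
    (hopt q (hQ hq)).trans <| dLen_mono hf (fun u => add_nonneg (hx u) (hsStar u))
      (fun u => by simp only [Pi.add_apply, Δ]; linarith [le_max_left (sStar u - s u) 0]) q
  have hΔpos : 0 < ∑ u, Δ u := sum_pos_of_cover hΔ hcover hp hlt
  have hΔS : ∑ u, Δ u ≤ ∑ u, sStar u :=
    sum_le_sum fun u _ => max_le (by linarith [hs u]) (hsStar u)
  have hgain : deficit f T Q' (x + s + Pi.single v a) ≤
      deficit f T Q (x + s) - rGain f T Q (x + s) v a :=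
    (deficit_mono hQ' _).trans_eq (deficit_add_single Q (x + s) v a)
  refine (deficit_mul_le_rGain_mul (w := x + s) hf (fun u => add_nonneg (hx u) (hs u)) hΔ hcover
    hΔpos hΔS hc ha hgreedy).trans ?_
  exact mul_le_mul_of_nonneg_right (by linarith) (hΔpos.trans_le hΔS).le

end Deficit

lemma le_mul_exp_neg_of_mul_le {D D' a c S : ℝ} (hS : 0 < S) (hD : 0 ≤ D)
    (h : c * D * a ≤ (D - D') * S) : D' ≤ D * Real.exp (-(c * a / S)) := by
  have h1 : D' ≤ D * (1 - c * a / S) := by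
    rw [mul_sub, mul_one, ← mul_div_assoc, le_sub_comm, div_le_iff₀ hS]
    linarith
  exact h1.trans (mul_le_mul_of_nonneg_left (by linarith [Real.add_one_le_exp (-(c * a / S))]) hD)

lemma le_mul_exp_neg_sum {D a : ℕ → ℝ} {c S : ℝ} (hS : 0 < S) (hD : ∀ t, 0 ≤ D t) {n : ℕ}
    (h : ∀ t < n, c * D t * a t ≤ (D t - D (t + 1)) * S) :
    D n ≤ D 0 * Real.exp (-(c * (∑ i ∈ range n, a i) / S)) := by
  induction n with
  | zero => simp
  | succ n ih =>
    calc D (n + 1) ≤ D n * Real.exp (-(c * a n / S)) :=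
          le_mul_exp_neg_of_mul_le hS (hD n) (h n n.lt_succ_self)
      _ ≤ D 0 * Real.exp (-(c * (∑ i ∈ range n, a i) / S)) * Real.exp (-(c * a n / S)) :=
          mul_le_mul_of_nonneg_right (ih fun t ht => h t (by omega)) (Real.exp_pos _).le
      _ = _ := by
          rw [mul_assoc, ← Real.exp_add, sum_range_succ]
          congr 2
          ring

theorem sum_range_le_log_of_decay {D a : ℕ → ℝ} {c S K m : ℝ} {n : ℕ} (hc : 0 < c)
    (hS : 0 < S) (hD : ∀ t, 0 ≤ D t) (h : ∀ t < n + 1, c * D t * a t ≤ (D t - D (t + 1)) * S)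
    (hm : 0 < m) (hD0 : D 0 ≤ K * m) (hDn : m ≤ D n) :
    ∑ i ∈ range (n + 1), a i ≤ S * (Real.log K + 1) / c := by
  set y := c * (∑ i ∈ range n, a i) / S with hy
  have hdecay : m ≤ K * m * Real.exp (-y) :=
    hDn.trans <| (le_mul_exp_neg_sum hS hD fun t ht => h t (by omega)).trans <|
      mul_le_mul_of_nonneg_right hD0 (Real.exp_pos _).le
  have hexp : Real.exp y * m ≤ K * m := by
    calc Real.exp y * m ≤ Real.exp y * (K * m * Real.exp (-y)) :=
          mul_le_mul_of_nonneg_left hdecay (Real.exp_pos _).le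
      _ = K * m := by rw [Real.exp_neg]; field_simp
  have hK : 0 < K := pos_of_mul_pos_left ((mul_pos (Real.exp_pos y) hm).trans_le hexp) hm.le
  have hlog : y ≤ Real.log K := (Real.le_log_iff_exp_le hK).2 (le_of_mul_le_mul_right hexp hm)
  have hDn_pos : 0 < D n := hm.trans_le hDn
  have hlast : c * a n ≤ S := by
    have := h n n.lt_succ_self
    nlinarith [hD (n + 1)]
  rw [hy, div_le_iff₀ hS] at hlog
  rw [sum_range_succ, le_div_iff₀ hc]
  linarith


open scoped Classical in
theorem stmt8_general {V : Type*} [Fintype V] [DecidableEq V]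
    (f : V → ℝ → ℝ) (T : ℝ) (hT : 0 < T)
    (hf : ∀ v, MonotoneOn (f v) (Set.Ici 0))
    (hf0 : ∀ v y, 0 ≤ y → 0 ≤ f v y)
    (P : Finset (List V))
    (x : V → ℝ) (hx : ∀ u, 0 ≤ x u)
    (ε : ℝ) (hε0 : 0 < ε)
    (ϵ : ℝ) (hϵ1 : ϵ < 1)
    (sStar : V → ℝ) (hsStar : ∀ u, 0 ≤ sStar u)
    (hopt : ∀ p ∈ P, T ≤ dLen f T (x + sStar) p)
    (L : ℕ) (hL : 1 ≤ L)
    (s : ℕ → V → ℝ) (v : ℕ → V) (xhat : ℕ → ℝ)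
    (hs0 : s 0 = 0)
    (hxhat : ∀ t, 1 ≤ t → t ≤ L → 0 < xhat t)
    (hstep : ∀ t, 1 ≤ t → t ≤ L → s t = s (t - 1) + Pi.single (v t) (xhat t))
    (Pt : ℕ → Finset (List V))
    (hPt : ∀ t, Pt t = P.filter (fun p => dLen f T (x + s t) p < T * (1 - ε)))
    (hgreedy : ∀ t, 1 ≤ t → t ≤ L → ∀ u, 0 < max (sStar u - s (t - 1) u) 0 →
      (1 - ϵ) * (rGain f T (Pt (t - 1)) (x + s (t - 1)) u (max (sStar u - s (t - 1) u) 0)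
          / max (sStar u - s (t - 1) u) 0)
        ≤ rGain f T (Pt (t - 1)) (x + s (t - 1)) (v t) (xhat t) / xhat t)
    (hfinal : (Pt (L - 1)).Nonempty) :
    ∑ t ∈ Finset.Icc 1 L, xhat t ≤
      (∑ u : V, sStar u) * (Real.log ((P.card : ℝ) * ε⁻¹) + 1) / (1 - ϵ) := by
  obtain ⟨n, rfl⟩ : ∃ n, L = n + 1 := ⟨L - 1, by omega⟩
  obtain ⟨p, hp⟩ : (Pt n).Nonempty := by simpa using hfinal
  have hs_le : ∀ {a b}, a ≤ b → b ≤ n + 1 → s a ≤ s b := fun hab hb =>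
    monotoneOn_Iic_of_eq_add_single (fun t h1 h2 => (hxhat t h1 h2).le) hstep (hab.trans hb) hb hab
  have hs : ∀ t ≤ n + 1, 0 ≤ s t := fun t ht => by simpa [hs0] using hs_le t.zero_le ht
  have hw : ∀ t ≤ n + 1, ∀ u, 0 ≤ (x + s t) u := fun t ht u => add_nonneg (hx u) (hs t ht u)
  have hPtP : ∀ t, Pt t ⊆ P := fun t => hPt t ▸ filter_subset _ _
  have hPt_anti : ∀ {a b}, a ≤ b → b ≤ n + 1 → Pt b ⊆ Pt a := fun hab hb => by
    simpa only [hPt] using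
      filter_dLen_lt_subset hf (hw _ (hab.trans hb)) (add_le_add_right (hs_le hab hb) x) P _
  have hmem : ∀ t ≤ n, p ∈ Pt t := fun t ht => hPt_anti ht (by omega) hp
  have hlt : ∀ t ≤ n, dLen f T (x + s t) p < T := fun t ht => by
    have := hmem t ht
    rw [hPt, mem_filter] at this
    nlinarith [this.2]
  have hS : 0 < ∑ u, sStar u := sum_pos_of_cover hsStar hopt (hPtP 0 (hmem 0 n.zero_le))
    (by simpa [hs0] using hlt 0 n.zero_le)
  set D : ℕ → ℝ := fun t => deficit f T (Pt t) (x + s t)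
  have hdecay : ∀ t < n + 1,
      (1 - ϵ) * D t * xhat (t + 1) ≤ (D t - D (t + 1)) * ∑ u, sStar u := by
    intro t ht
    have hg := hgreedy (t + 1) (by omega) (by omega)
    have hst := hstep (t + 1) (by omega) (by omega)
    simp only [Nat.add_sub_cancel] at hg hst
    simp only [D, hst, ← add_assoc]
    exact deficit_decrease_of_greedy hf (hPtP t) (hPt_anti t.le_succ ht) hx (hs t ht.le) hsStar
      hopt (hmem t (by omega)) (hlt t (by omega)) (by linarith)
      (hxhat (t + 1) (by omega) (by omega)) hg
  have hD0 : D 0 ≤ (P.card : ℝ) * ε⁻¹ * (T * ε) :=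
    calc D 0 ≤ (Pt 0).card * T := deficit_le_card_mul hT.le hf0 _ (hw 0 (by omega))
      _ ≤ P.card * T := by gcongr; exact hPtP 0
      _ = _ := by field_simp
  have hDn : T * ε ≤ D n := le_deficit_of_mem hp (by rw [hPt, mem_filter] at hp; linarith [hp.2])
  rw [← Finset.Ico_add_one_right_eq_Icc, ← zero_add 1, ← sum_Ico_add' xhat, ← range_eq_Ico]
  exact sum_range_le_log_of_decay (by linarith) hS (fun t => deficit_nonneg _ _) hdecay
    (by positivity) hD0 hDn

open scoped Classical in
/-- Theorem 2: Threshold Expansion approximation guarantee, stated for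
any execution trace satisfying the greedy invariant. -/
theorem stmt8 {V : Type*} [Fintype V] [DecidableEq V]
    (f : V → ℝ → ℝ) (T : ℝ) (hT : 0 < T)
    (hf : ∀ v, MonotoneOn (f v) (Set.Ici 0))
    (hf0 : ∀ v y, 0 ≤ y → 0 ≤ f v y)
    (P : Finset (List V)) (hPne : P.Nonempty) (hP : ∀ p ∈ P, p.Nodup)
    (x : V → ℝ) (hx : ∀ u, 0 ≤ x u)
    (ε : ℝ) (hε0 : 0 < ε) (hε1 : ε < 1)
    (ϵ : ℝ) (hϵ0 : 0 ≤ ϵ) (hϵ1 : ϵ < 1)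
    (sStar : V → ℝ) (hsStar : ∀ u, 0 ≤ sStar u)
    (hopt : ∀ p ∈ P, T ≤ dLen f T (x + sStar) p)
    (L : ℕ) (hL : 1 ≤ L)
    (s : ℕ → V → ℝ) (v : ℕ → V) (xhat : ℕ → ℝ)
    (hs0 : s 0 = 0)
    (hxhat : ∀ t, 1 ≤ t → t ≤ L → 0 < xhat t)
    (hstep : ∀ t, 1 ≤ t → t ≤ L → s t = s (t - 1) + Pi.single (v t) (xhat t))
    (Pt : ℕ → Finset (List V))
    (hPt : ∀ t, Pt t = P.filter (fun p => dLen f T (x + s t) p < T * (1 - ε)))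
    (hgreedy : ∀ t, 1 ≤ t → t ≤ L → ∀ u, 0 < max (sStar u - s (t - 1) u) 0 →
      (1 - ϵ) * (rGain f T (Pt (t - 1)) (x + s (t - 1)) u (max (sStar u - s (t - 1) u) 0)
          / max (sStar u - s (t - 1) u) 0)
        ≤ rGain f T (Pt (t - 1)) (x + s (t - 1)) (v t) (xhat t) / xhat t)
    (hfinal : (Pt (L - 1)).Nonempty) :
    ∑ t ∈ Finset.Icc 1 L, xhat t ≤
      (∑ u : V, sStar u) * (Real.log ((P.card : ℝ) * ε⁻¹) + 1) / (1 - ϵ) :=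
  stmt8_general f T hT hf hf0 P x hx ε hε0 ϵ hϵ1 sStar hsStar hopt L hL s v xhat hs0 hxhat hstep Pt
    hPt hgreedy hfinal
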